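/- arXiv:2411.07955 — 2 statements merged into one kernel-verified Lean document; each statement's English description precedes it below -/
import Mathlib

section
/- Frontier mirroring construction: let F be an UNSAT formula with a resolution proof whose non-axiom entries, in order, are Q₁, …, Q_K. Then there exists a resolution proof of Frontier(F) consisting of the clauses of Frontier(F) (listed as axioms) followed by entries Q′₁, …, Q′_K such that Q′_j ⊆ Q_j for every 1 ≤ j ≤ K; in particular Q′_K = ⊥. -/
open scoped Classical

noncomputable section

abbrev Var := ℕ
abbrev Lit := Var × Bool

/-- A clause: a finite set of literals containing no variable together with its negation. -/
abbrev Clause := {s : Finset Lit // ∀ v : Var, ¬((v, true) ∈ s ∧ (v, false) ∈ s)}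

/-- The empty clause ⊥. -/
def emptyClause : Clause := ⟨∅, by simp⟩

abbrev CFormula := Finset Clause
abbrev Model := Var → Bool

/-- A model satisfies a clause if some literal evaluates to true under it. -/
def SatClause (m : Model) (C : Clause) : Prop := ∃ l ∈ C.1, m l.1 = l.2

/-- A model satisfies a formula if it satisfies every clause. -/
def SatFormula (m : Model) (F : CFormula) : Prop := ∀ C ∈ F, SatClause m C

def Satisfiable (F : CFormula) : Prop := ∃ m, SatFormula m F

def Unsat (F : CFormula) : Prop := ¬ Satisfiable F

/-- `IsResolvent A B R` : `R = A ⋄ B` with some pivot variable `x`: `x ∈ A`, `x̄ ∈ B`,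
no other variable occurs with opposite polarities in `A` and `B`, and
`R = (A ∖ {x}) ∪ (B ∖ {x̄})`. -/
def IsResolvent (A B R : Clause) : Prop :=
  ∃ x : Var, (x, true) ∈ A.1 ∧ (x, false) ∈ B.1 ∧
    (∀ y : Var,
      (((y, true) ∈ A.1 ∧ (y, false) ∈ B.1) ∨ ((y, false) ∈ A.1 ∧ (y, true) ∈ B.1)) → y = x) ∧
    R.1 = (A.1.erase (x, true)) ∪ (B.1.erase (x, false))

/-- A resolution proof of `F`: a nonempty sequence of clauses ending in the empty clause
where each entry is an axiom (a clause of `F`) or a resolvent of two earlier entries. -/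
def IsResProof (F : CFormula) (Q : List Clause) : Prop :=
  Q ≠ [] ∧ Q.getLast? = some emptyClause ∧
  ∀ i : Fin Q.length, Q.get i ∈ F ∨
    ∃ j k : Fin Q.length, j < i ∧ k < i ∧ IsResolvent (Q.get j) (Q.get k) (Q.get i)

/-- `layersUpTo L j = L⁰ ∪ ⋯ ∪ L^{j-1}`. -/
def layersUpTo (L : List CFormula) (j : ℕ) : CFormula :=
  (Finset.range j).biUnion fun i => L.getD i ∅

/-- `tailUnion L = L¹ ∪ ⋯ ∪ Lⁿ`. -/
def tailUnion (L : List CFormula) : CFormula :=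
  (Finset.Ico 1 L.length).biUnion fun i => L.getD i ∅

/-- A layer list on `F`: initialization, termination, consistency, take-it-or-leave-it. -/
def IsLayerList (F : CFormula) (L : List CFormula) : Prop :=
  L.head? = some F ∧
  (∃ k, 1 ≤ k ∧ k < L.length ∧ emptyClause ∈ L.getD k ∅) ∧
  (∀ j, 1 ≤ j → j < L.length → ∀ ω ∈ L.getD j ∅,
      ∃ ω' ∈ L.getD (j - 1) ∅, ∃ ω'' ∈ layersUpTo L j, IsResolvent ω' ω'' ω) ∧
  (∀ k j, 1 ≤ k → k < j → j < L.length → ∀ ω ∈ L.getD j ∅,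
      ¬ ∃ ω' ∈ L.getD (k - 1) ∅, ∃ ω'' ∈ layersUpTo L k, IsResolvent ω' ω'' ω)

/-- The length of a layer list: the total number of clauses in all its layers. -/
def llLength (L : List CFormula) : ℕ := (L.map Finset.card).sum

/-- The frontier of `F`: clauses of `F` not strictly containing another clause of `F`. -/
def Frontier (F : CFormula) : CFormula := F.filter fun ω => ¬ ∃ ω' ∈ F, ω'.1 ⊂ ω.1

/-- A subproblem: previous, current, next and forgotten clause sets. -/
structure Subproblem where
  previous : CFormula
  current : CFormula
  next : CFormula
  forgotten : CFormula

/-- The known clauses of a subproblem. -/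
def Subproblem.known (P : Subproblem) : CFormula := P.previous ∪ P.current ∪ P.next

/-- A compatible proof of a subproblem `P`: a layer list on `F` such that for some `k`,
`L^k = Current(P)`, `L⁰ ∪ ⋯ ∪ L^{k-1} = Previous(P)`, `L^{k+1} ⊇ Next(P)`, and no
forgotten clause occurs in any layer. -/
def CompatibleProof (F : CFormula) (P : Subproblem) (L : List CFormula) : Prop :=
  IsLayerList F L ∧
  (∃ k, k < L.length ∧ L.getD k ∅ = P.current ∧ layersUpTo L k = P.previous ∧
      P.next ⊆ L.getD (k + 1) ∅) ∧
  ∀ ω ∈ P.forgotten, ω ∉ layersUpTo L L.length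

/-!
Every clause of `F` contains a clause of `Frontier F`. Replay the proof with each axiom replaced
by such a frontier clause and each step `Q_j ⋄ Q_k` by a step on the replacements `Q'_j ⊆ Q_j`,
`Q'_k ⊆ Q_k`: if both still contain their pivot literal, `Q'_j ⋄ Q'_k` is defined (subsets create
no new clash) and lies in `Q_j ⋄ Q_k`; if one of them has lost it, that one already lies in
`Q_j ⋄ Q_k` and is repeated. Each replacement is thus contained in its original, so the last
one is `⊥`. When `⊥ ∈ F`, it lies in the frontier and listing it last is already a proof.
-/

namespace List

theorem Forall₂.exists_getLast?_eq {α β : Type*} {R : α → β → Prop} {l₁ : List α} {l₂ : List β}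
    {b : β} (h : Forall₂ R l₁ l₂) (hb : l₂.getLast? = some b) :
    ∃ a, l₁.getLast? = some a ∧ R a b := by
  rw [← head?_reverse] at hb ⊢
  obtain ⟨t, ht⟩ : ∃ t, l₂.reverse = b :: t := by
    cases h₂ : l₂.reverse <;> simp_all
  have hrev := forall₂_reverse_iff.mpr h
  rw [ht] at hrev
  obtain ⟨a, s, hab, -, hs⟩ := forall₂_cons_right_iff.mp hrev
  exact ⟨a, by simp [hs], hab⟩

theorem getLast?_filter_of_getLast?_eq_some {α : Type*} {l : List α} {p : α → Bool} {a : α}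
    (h : l.getLast? = some a) (hp : p a) : (l.filter p).getLast? = some a := by
  obtain ⟨l', rfl⟩ := getLast?_eq_some_iff.mp h
  simp [hp]

end List

theorem Clause.eq_emptyClause_of_subset {C : Clause} (h : C.1 ⊆ ∅) : C = emptyClause :=
  Subtype.ext (Finset.subset_empty.mp h)

theorem exists_mem_frontier_subset {F : CFormula} {C : Clause} (hC : C ∈ F) :
    ∃ C' ∈ Frontier F, C'.1 ⊆ C.1 := by
  obtain ⟨C', hC', hmin⟩ :=
    (F.filter fun C' => C'.1 ⊆ C.1).exists_min_image (fun C' => C'.1.card) ⟨C, by simp [hC]⟩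
  rw [Finset.mem_filter] at hC'
  refine ⟨C', Finset.mem_filter.mpr ⟨hC'.1, ?_⟩, hC'.2⟩
  rintro ⟨ω, hω, hss⟩
  exact (Finset.card_lt_card hss).not_ge
    (hmin ω (Finset.mem_filter.mpr ⟨hω, hss.subset.trans hC'.2⟩))

theorem emptyClause_mem_frontier {F : CFormula} (h : emptyClause ∈ F) :
    emptyClause ∈ Frontier F := by
  refine Finset.mem_filter.mpr ⟨h, ?_⟩
  rintro ⟨ω, -, hss⟩
  exact Finset.not_ssubset_empty _ hss

theorem IsResolvent.exists_subset_of_subset {A B R A' B' : Clause} (hR : IsResolvent A B R)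
    (hA : A'.1 ⊆ A.1) (hB : B'.1 ⊆ B.1) :
    ∃ R' : Clause, R'.1 ⊆ R.1 ∧ (R' = A' ∨ R' = B' ∨ IsResolvent A' B' R') := by
  obtain ⟨x, hxA, hxB, hpivot, hRdef⟩ := hR
  rw [hRdef]
  by_cases hxA' : (x, true) ∈ A'.1
  swap
  · refine ⟨A', fun l hl => Finset.mem_union_left _ (Finset.mem_erase.mpr ⟨?_, hA hl⟩), .inl rfl⟩
    rintro rfl
    exact hxA' hl
  by_cases hxB' : (x, false) ∈ B'.1
  swap
  · refine ⟨B', fun l hl => Finset.mem_union_right _ (Finset.mem_erase.mpr ⟨?_, hB hl⟩),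
      .inr (.inl rfl)⟩
    rintro rfl
    exact hxB' hl
  have hconsistent : ∀ v : Var, ¬((v, true) ∈ A'.1.erase (x, true) ∪ B'.1.erase (x, false) ∧
      (v, false) ∈ A'.1.erase (x, true) ∪ B'.1.erase (x, false)) := by
    rintro v ⟨hv, hv'⟩
    simp only [Finset.mem_union, Finset.mem_erase] at hv hv'
    rcases hv with ⟨hvx, hvA⟩ | ⟨-, hvB⟩ <;> rcases hv' with ⟨-, hv'A⟩ | ⟨-, hv'B⟩
    · exact A'.2 v ⟨hvA, hv'A⟩
    · exact hvx (by rw [hpivot v (.inl ⟨hA hvA, hB hv'B⟩)])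
    · obtain rfl := hpivot v (.inr ⟨hA hv'A, hB hvB⟩)
      exact A'.2 v ⟨hxA', hv'A⟩
    · exact B'.2 v ⟨hvB, hv'B⟩
  refine ⟨⟨_, hconsistent⟩, Finset.union_subset_union (Finset.erase_subset_erase _ hA)
    (Finset.erase_subset_erase _ hB), .inr (.inr ⟨x, hxA', hxB', ?_, rfl⟩)⟩
  exact fun y hy => hpivot y (hy.imp (fun h => ⟨hA h.1, hB h.2⟩) (fun h => ⟨hA h.1, hB h.2⟩))

def IsDerivation (S : CFormula) (L : List Clause) : Prop :=
  ∀ i (hi : i < L.length), L[i] ∈ S ∨ ∃ A ∈ L.take i, ∃ B ∈ L.take i, IsResolvent A B L[i]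

theorem isResProof_iff {F : CFormula} {Q : List Clause} :
    IsResProof F Q ↔ Q ≠ [] ∧ Q.getLast? = some emptyClause ∧ IsDerivation F Q := by
  refine and_congr_right fun _ => and_congr_right fun _ => ?_
  simp only [IsDerivation, Fin.forall_iff, List.get_eq_getElem, List.mem_take_iff_getElem]
  refine forall_congr' fun i => forall_congr' fun hi => or_congr_right ?_
  constructor
  · rintro ⟨⟨j, hj⟩, ⟨k, hk⟩, hji, hki, hres⟩
    exact ⟨_, ⟨j, lt_min hji hj, rfl⟩, _, ⟨k, lt_min hki hk, rfl⟩, hres⟩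
  · rintro ⟨_, ⟨j, hj, rfl⟩, _, ⟨k, hk, rfl⟩, hres⟩
    exact ⟨⟨j, by omega⟩, ⟨k, by omega⟩, Fin.mk_lt_mk.mpr (by omega), Fin.mk_lt_mk.mpr (by omega),
      hres⟩

theorem isDerivation_of_forall_mem {S : CFormula} {L : List Clause} (h : ∀ C ∈ L, C ∈ S) :
    IsDerivation S L :=
  fun _ hi => .inl (h _ (List.getElem_mem hi))

theorem isDerivation_append_singleton {S : CFormula} {L : List Clause} {C : Clause} :
    IsDerivation S (L ++ [C]) ↔
      IsDerivation S L ∧ (C ∈ S ∨ ∃ A ∈ L, ∃ B ∈ L, IsResolvent A B C) := by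
  constructor
  · intro h
    refine ⟨fun i hi => ?_, ?_⟩
    · have := h i (by simp; omega)
      rwa [List.getElem_append_left hi, List.take_append_of_le_length hi.le] at this
    · simpa using h L.length (by simp)
  · rintro ⟨hL, hC⟩ i hi
    rcases Nat.lt_or_ge i L.length with hi' | hi'
    · rw [List.getElem_append_left hi', List.take_append_of_le_length hi'.le]
      exact hL i hi'
    · obtain rfl : i = L.length := by simp at hi; omega
      simpa using hC

theorem IsDerivation.append_mem {S : CFormula} {L : List Clause} {C : Clause}
    (hL : IsDerivation S L) (hC : C ∈ L) : IsDerivation S (L ++ [C]) := by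
  obtain ⟨t, ht, rfl⟩ := List.getElem_of_mem hC
  refine isDerivation_append_singleton.mpr ⟨hL, (hL t ht).imp_right ?_⟩
  rintro ⟨A, hA, B, hB, hres⟩
  exact ⟨A, List.mem_of_mem_take hA, B, List.mem_of_mem_take hB, hres⟩

theorem IsDerivation.exists_mirror {F G : CFormula} {axs : List Clause}
    (haxs : ∀ C ∈ axs, C ∈ G) (hcover : ∀ C ∈ F, ∃ C' ∈ axs, C'.1 ⊆ C.1)
    {Q : List Clause} (hQ : IsDerivation F Q) :
    ∃ Q' : List Clause, List.Forall₂ (fun C' C : Clause => C'.1 ⊆ C.1) Q' (Q.filter (· ∉ F)) ∧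
      IsDerivation G (axs ++ Q') ∧ ∀ C ∈ Q, ∃ C' ∈ axs ++ Q', C'.1 ⊆ C.1 := by
  induction Q using List.reverseRecOn with
  | nil => exact ⟨[], by simp, isDerivation_of_forall_mem (by simpa using haxs), by simp⟩
  | append_singleton Q C ih =>
    obtain ⟨hQ, hC⟩ := isDerivation_append_singleton.mp hQ
    obtain ⟨Q', hsub, hder, hcov⟩ := ih hQ
    by_cases hCF : C ∈ F
    · refine ⟨Q', by simpa [hCF] using hsub, hder, ?_⟩
      intro E hE
      rcases List.mem_append.mp hE with hE | hE
      · exact hcov E hE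
      · obtain rfl := List.mem_singleton.mp hE
        obtain ⟨C', hC', hC'C⟩ := hcover _ hCF
        exact ⟨C', List.mem_append_left _ hC', hC'C⟩
    obtain ⟨A, hA, B, hB, hres⟩ := hC.resolve_left hCF
    obtain ⟨A', hA', hAA'⟩ := hcov A hA
    obtain ⟨B', hB', hBB'⟩ := hcov B hB
    obtain ⟨R, hRC, hR⟩ := hres.exists_subset_of_subset hAA' hBB'
    refine ⟨Q' ++ [R], by simpa [hCF] using List.rel_append hsub (.cons hRC .nil), ?_, ?_⟩
    · rw [← List.append_assoc]
      rcases hR with rfl | rfl | hR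
      · exact hder.append_mem hA'
      · exact hder.append_mem hB'
      · exact isDerivation_append_singleton.mpr ⟨hder, .inr ⟨A', hA', B', hB', hR⟩⟩
    · intro E hE
      rcases List.mem_append.mp hE with hE | hE
      · obtain ⟨E', hE', hE'E⟩ := hcov E hE
        exact ⟨E', by rw [← List.append_assoc]; exact List.mem_append_left _ hE', hE'E⟩
      · obtain rfl := List.mem_singleton.mp hE
        exact ⟨R, by simp, hRC⟩

theorem Finset.exists_nodup_toFinset_getLast? {α : Type*} [DecidableEq α] {s : Finset α} {a : α}
    (ha : a ∈ s) : ∃ l : List α, l.Nodup ∧ l.toFinset = s ∧ l.getLast? = some a := by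
  refine ⟨(s.erase a).toList ++ [a], ?_, ?_, by simp⟩
  · refine (s.erase a).nodup_toList.append (List.nodup_singleton a) ?_
    simp
  · simp [Finset.insert_erase ha]

theorem isResProof_append_map_emptyClause {G : CFormula} (hG : emptyClause ∈ G)
    (D : List Clause) :
    ∃ axs : List Clause, axs.Nodup ∧ axs.toFinset = G ∧
      IsResProof G (axs ++ D.map fun _ => emptyClause) := by
  obtain ⟨axs, hnd, hfs, haxs⟩ := Finset.exists_nodup_toFinset_getLast? hG
  have hlast : (axs ++ D.map fun _ => emptyClause).getLast? = some emptyClause := by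
    rw [List.getLast?_append, List.getLast?_map, haxs]
    cases D.getLast? <;> rfl
  refine ⟨axs, hnd, hfs, isResProof_iff.mpr ⟨List.getLast?_isSome.mp (by rw [hlast]; rfl), hlast,
    isDerivation_of_forall_mem fun C hC => ?_⟩⟩
  rcases List.mem_append.mp hC with hC | hC
  · exact hfs ▸ List.mem_toFinset.mpr hC
  · obtain ⟨_, -, rfl⟩ := List.mem_map.mp hC
    exact hG

theorem frontier_mirroring_general (F : CFormula)
    (Q D : List Clause) (hQ : IsResProof F Q)
    (hD : D = Q.filter fun C => C ∉ F) :
    ∃ axs Q' : List Clause, axs.Nodup ∧ axs.toFinset = Frontier F ∧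
      Q'.length = D.length ∧
      (∀ i (hi : i < Q'.length) (hi' : i < D.length),
        (Q'.get ⟨i, hi⟩).1 ⊆ (D.get ⟨i, hi'⟩).1) ∧
      IsResProof (Frontier F) (axs ++ Q') ∧
      (Q' ≠ [] → Q'.getLast? = some emptyClause) := by
  obtain ⟨-, hQlast, hQder⟩ := isResProof_iff.mp hQ
  subst hD
  by_cases hbot : emptyClause ∈ F
  · obtain ⟨axs, hnd, hfs, hproof⟩ := isResProof_append_map_emptyClause
      (emptyClause_mem_frontier hbot) (Q.filter fun C => C ∉ F)
    refine ⟨axs, _, hnd, hfs, by simp, fun _ _ _ => by simp [emptyClause], hproof, fun h => ?_⟩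
    rw [List.getLast?_eq_some_getLast h]
    simp
  · obtain ⟨Q', hsub, hder, -⟩ := hQder.exists_mirror (G := Frontier F)
      (fun _ => Finset.mem_toList.mp) fun _ hC => by simpa using exists_mem_frontier_subset hC
    obtain ⟨R, hR, hRbot⟩ :=
      hsub.exists_getLast?_eq (List.getLast?_filter_of_getLast?_eq_some hQlast (by simpa))
    obtain rfl := Clause.eq_emptyClause_of_subset hRbot
    have hlast : ((Frontier F).toList ++ Q').getLast? = some emptyClause := by
      simp [List.getLast?_append, hR]
    exact ⟨(Frontier F).toList, Q', Finset.nodup_toList _, Finset.toList_toFinset _,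
      hsub.length_eq, (List.forall₂_iff_get.mp hsub).2,
      isResProof_iff.mpr ⟨List.getLast?_isSome.mp (by rw [hlast]; rfl), hlast, hder⟩, fun _ => hR⟩

/-- Frontier mirroring construction. -/
theorem frontier_mirroring (F : CFormula) (hF : Unsat F)
    (Q D : List Clause) (hQ : IsResProof F Q)
    (hD : D = Q.filter fun C => C ∉ F) :
    ∃ axs Q' : List Clause, axs.Nodup ∧ axs.toFinset = Frontier F ∧
      Q'.length = D.length ∧
      (∀ i (hi : i < Q'.length) (hi' : i < D.length),
        (Q'.get ⟨i, hi⟩).1 ⊆ (D.get ⟨i, hi'⟩).1) ∧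
      IsResProof (Frontier F) (axs ++ Q') ∧
      (Q' ≠ [] → Q'.getLast? = some emptyClause) :=
  frontier_mirroring_general F Q D hQ hD

end
end

section
/- Remaining-length lower bound: let P be a subproblem for an UNSAT formula F. Then every compatible proof of P contains at least min{#S − 1 : S ⊆ Frontier(Known(P)), S is UNSAT} clauses that do not belong to Known(P). -/
open scoped Classical

noncomputable section

/-!
Start from the unsatisfiable formula `{⊥}` and repeatedly replace the unknown clause of
highest first layer by the two clauses it is resolved from in that layer: by soundness of
resolution the formula stays unsatisfiable, and each parent is known or first occurs in a strictly
earlier layer, so every unknown clause is replaced at most once and each replacement adds at most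
one clause. This ends with an unsatisfiable set of known clauses of size at most one more than the
number of unknown clauses of the proof. Replacing each of its clauses by a frontier clause
contained in it keeps it unsatisfiable without making it larger.
-/

theorem SatClause.of_subset {m : Model} {C C' : Clause} (h : C'.1 ⊆ C.1)
    (hC' : SatClause m C') : SatClause m C :=
  let ⟨l, hl, hml⟩ := hC'
  ⟨l, h hl, hml⟩

theorem SatClause.of_isResolvent {A B R : Clause} {m : Model} (h : IsResolvent A B R)
    (hA : SatClause m A) (hB : SatClause m B) : SatClause m R := by
  obtain ⟨x, -, -, -, hR⟩ := h
  obtain ⟨l, hl, hml⟩ := hA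
  obtain ⟨l', hl', hml'⟩ := hB
  by_cases hlx : l = (x, true)
  · by_cases hl'x : l' = (x, false)
    · subst hlx hl'x
      simp_all
    · exact ⟨l', hR ▸ Finset.mem_union_right _ (Finset.mem_erase.2 ⟨hl'x, hl'⟩), hml'⟩
  · exact ⟨l, hR ▸ Finset.mem_union_left _ (Finset.mem_erase.2 ⟨hlx, hl⟩), hml⟩

theorem unsat_singleton_emptyClause : Unsat {emptyClause} := by
  rintro ⟨m, hm⟩
  obtain ⟨l, hl, -⟩ := hm emptyClause (Finset.mem_singleton_self _)
  simp [emptyClause] at hl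

theorem Unsat.of_satFormula_imp {S S' : CFormula} (hS : Unsat S)
    (h : ∀ m, SatFormula m S' → SatFormula m S) : Unsat S' :=
  fun ⟨m, hm⟩ => hS ⟨m, h m hm⟩

theorem Unsat.insert_insert_erase_of_isResolvent {S : CFormula} {A B ω : Clause}
    (hS : Unsat S) (h : IsResolvent A B ω) : Unsat (insert A (insert B (S.erase ω))) := by
  refine hS.of_satFormula_imp fun m hm C hC => ?_
  by_cases hCω : C = ω
  · subst hCω
    exact .of_isResolvent h (hm A (by simp)) (hm B (by simp))
  · exact hm C (by simp [hCω, hC])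

theorem exists_mem_frontier_subset_s16 {G : CFormula} {ω : Clause} (hω : ω ∈ G) :
    ∃ ω' ∈ Frontier G, ω'.1 ⊆ ω.1 := by
  obtain ⟨ω', hω', hmin⟩ := Finset.exists_min_image (G.filter fun ω' => ω'.1 ⊆ ω.1)
    (fun ω' => ω'.1.card) ⟨ω, by simp [hω]⟩
  rw [Finset.mem_filter] at hω'
  refine ⟨ω', Finset.mem_filter.2 ⟨hω'.1, ?_⟩, hω'.2⟩
  rintro ⟨ω'', hω'', hss⟩
  have := hmin ω'' (Finset.mem_filter.2 ⟨hω'', hss.subset.trans hω'.2⟩)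
  exact (Finset.card_lt_card hss).not_ge this

theorem exists_unsat_subset_frontier {G S : CFormula} (hSG : S ⊆ G) (hS : Unsat S) :
    ∃ S' ⊆ Frontier G, Unsat S' ∧ S'.card ≤ S.card := by
  choose! f hfG hfsub using fun ω (hω : ω ∈ G) => exists_mem_frontier_subset_s16 hω
  refine ⟨S.image f, ?_, ?_, Finset.card_image_le⟩
  · simp only [Finset.image_subset_iff]
    exact fun ω hω => hfG ω (hSG hω)
  · exact hS.of_satFormula_imp fun m hm ω hω =>
      (hm (f ω) (Finset.mem_image_of_mem f hω)).of_subset (hfsub ω (hSG hω))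

def IsRankedDerivation (G U : CFormula) (rank : Clause → ℕ) : Prop :=
  ∀ ω ∈ U, ∃ A B, IsResolvent A B ω ∧
    (A ∈ G ∨ A ∈ U ∧ rank A < rank ω) ∧ (B ∈ G ∨ B ∈ U ∧ rank B < rank ω)

namespace IsRankedDerivation

variable {G U : CFormula} {rank : Clause → ℕ}

theorem erase_of_forall_rank_le (hU : IsRankedDerivation G U rank) {ω : Clause}
    (hmax : ∀ ω' ∈ U, rank ω' ≤ rank ω) : IsRankedDerivation G (U.erase ω) rank := by
  have lower {C ω' : Clause} (hω' : ω' ∈ U) :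
      C ∈ G ∨ C ∈ U ∧ rank C < rank ω' → C ∈ G ∨ C ∈ U.erase ω ∧ rank C < rank ω' := by
    rintro (hC | ⟨hC, hlt⟩)
    · exact .inl hC
    · refine .inr ⟨Finset.mem_erase.2 ⟨?_, hC⟩, hlt⟩
      rintro rfl
      exact (hmax ω' hω').not_gt hlt
  intro ω' hω'
  have hω'U := Finset.mem_of_mem_erase hω'
  obtain ⟨A, B, hres, hA, hB⟩ := hU ω' hω'U
  exact ⟨A, B, hres, lower hω'U hA, lower hω'U hB⟩

theorem exists_unsat_subset (hU : IsRankedDerivation G U rank) {S : CFormula}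
    (hS : Unsat S) (hSGU : S ⊆ G ∪ U) :
    ∃ S' ⊆ G, Unsat S' ∧ S'.card ≤ S.card + U.card := by
  induction U using Finset.strongInduction generalizing S with
  | H U ih =>
    rcases U.eq_empty_or_nonempty with rfl | hne
    · exact ⟨S, by simpa using hSGU, hS, by simp⟩
    obtain ⟨ω, hωU, hmax⟩ := U.exists_max_image rank hne
    have hU' := hU.erase_of_forall_rank_le hmax
    have hcard : (U.erase ω).card + 1 = U.card := Finset.card_erase_add_one hωU
    have mem_of_ne {C : Clause} (hC : C ∈ G ∪ U) (hCω : C ≠ ω) : C ∈ G ∪ U.erase ω := by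
      simp only [Finset.mem_union, Finset.mem_erase] at hC ⊢
      tauto
    by_cases hωS : ω ∈ S
    · obtain ⟨A, B, hres, hA, hB⟩ := hU ω hωU
      have parent_mem {C : Clause} :
          C ∈ G ∨ C ∈ U ∧ rank C < rank ω → C ∈ G ∪ U.erase ω := by
        rintro (hC | ⟨hC, hlt⟩)
        · exact Finset.mem_union_left _ hC
        · exact Finset.mem_union_right _ (Finset.mem_erase.2 ⟨by rintro rfl; omega, hC⟩)
      have hS'GU : insert A (insert B (S.erase ω)) ⊆ G ∪ U.erase ω := by
        refine Finset.insert_subset (parent_mem hA) (Finset.insert_subset (parent_mem hB) ?_)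
        exact fun C hC =>
          mem_of_ne (hSGU (Finset.mem_of_mem_erase hC)) (Finset.ne_of_mem_erase hC)
      obtain ⟨S', hS'G, hS', hS'card⟩ := ih _ (Finset.erase_ssubset hωU) hU'
        (hS.insert_insert_erase_of_isResolvent hres) hS'GU
      refine ⟨S', hS'G, hS', ?_⟩
      have h₁ := Finset.card_insert_le A (insert B (S.erase ω))
      have h₂ := Finset.card_insert_le B (S.erase ω)
      have h₃ := Finset.card_erase_add_one hωS
      omega
    · have hSGU' : S ⊆ G ∪ U.erase ω := fun C hC =>
        mem_of_ne (hSGU hC) (by rintro rfl; exact hωS hC)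
      obtain ⟨S', hS'G, hS', hS'card⟩ := ih _ (Finset.erase_ssubset hωU) hU' hS hSGU'
      exact ⟨S', hS'G, hS', by omega⟩

end IsRankedDerivation

theorem mem_layersUpTo {L : List CFormula} {n : ℕ} {ω : Clause} :
    ω ∈ layersUpTo L n ↔ ∃ j < n, ω ∈ L.getD j ∅ := by
  simp [layersUpTo]

theorem lt_length_of_mem_getD {L : List CFormula} {j : ℕ} {ω : Clause}
    (h : ω ∈ L.getD j ∅) : j < L.length := by
  by_contra hj
  simp [List.getElem?_eq_none (not_lt.1 hj)] at h

theorem mem_layersUpTo_length_of_mem_getD {L : List CFormula} {j : ℕ} {ω : Clause}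
    (h : ω ∈ L.getD j ∅) : ω ∈ layersUpTo L L.length :=
  mem_layersUpTo.2 ⟨j, lt_length_of_mem_getD h, h⟩

def firstLayer (L : List CFormula) (ω : Clause) : ℕ := sInf {j | ω ∈ L.getD j ∅}

theorem firstLayer_le {L : List CFormula} {j : ℕ} {ω : Clause} (h : ω ∈ L.getD j ∅) :
    firstLayer L ω ≤ j :=
  Nat.sInf_le h

theorem mem_getD_firstLayer {L : List CFormula} {j : ℕ} {ω : Clause} (h : ω ∈ L.getD j ∅) :
    ω ∈ L.getD (firstLayer L ω) ∅ :=
  Nat.sInf_mem (s := {j | ω ∈ L.getD j ∅}) ⟨j, h⟩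

theorem IsLayerList.isRankedDerivation {F G : CFormula} {L : List CFormula}
    (hL : IsLayerList F L) (h₀ : L.getD 0 ∅ ⊆ G) :
    IsRankedDerivation G (layersUpTo L L.length \ G) (firstLayer L) := by
  intro ω hω
  obtain ⟨hωL, hωG⟩ := Finset.mem_sdiff.1 hω
  obtain ⟨j, -, hj⟩ := mem_layersUpTo.1 hωL
  set r := firstLayer L ω
  have hr : ω ∈ L.getD r ∅ := mem_getD_firstLayer hj
  have hr₀ : r ≠ 0 := fun h => hωG (h₀ (h ▸ hr))
  have parent {C : Clause} {i : ℕ} (hi : i < r) (hC : C ∈ L.getD i ∅) :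
      C ∈ G ∨ C ∈ layersUpTo L L.length \ G ∧ firstLayer L C < r := by
    by_cases hCG : C ∈ G
    · exact .inl hCG
    · exact .inr ⟨Finset.mem_sdiff.2 ⟨mem_layersUpTo_length_of_mem_getD hC, hCG⟩,
        (firstLayer_le hC).trans_lt hi⟩
  obtain ⟨A, hA, B, hB, hres⟩ :=
    hL.2.2.1 r (Nat.one_le_iff_ne_zero.2 hr₀) (lt_length_of_mem_getD hr) ω hr
  obtain ⟨i, hi, hBi⟩ := mem_layersUpTo.1 hB
  exact ⟨A, B, hres, parent (by omega) hA, parent hi hBi⟩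

theorem CompatibleProof.getD_zero_subset_known {F : CFormula} {P : Subproblem}
    {L : List CFormula} (hL : CompatibleProof F P L) : L.getD 0 ∅ ⊆ P.known := by
  obtain ⟨-, ⟨k, -, hcur, hprev, -⟩, -⟩ := hL
  intro ω hω
  simp only [Subproblem.known, Finset.mem_union]
  rcases Nat.eq_zero_or_pos k with rfl | hk
  · exact .inl (.inr (hcur ▸ hω))
  · exact .inl (.inl (hprev ▸ mem_layersUpTo.2 ⟨0, hk, hω⟩))

theorem remaining_length_bound_general (F : CFormula) (P : Subproblem)
    (L : List CFormula) (hL : CompatibleProof F P L) :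
    sInf {k : ℕ | ∃ S : CFormula, S ⊆ Frontier P.known ∧ Unsat S ∧ k = S.card - 1}
      ≤ (layersUpTo L L.length \ P.known).card := by
  obtain ⟨k, -, -, hbot⟩ := hL.1.2.1
  have hbotGT : {emptyClause} ⊆ P.known ∪ (layersUpTo L L.length \ P.known) := by
    rw [Finset.singleton_subset_iff, Finset.union_sdiff_self_eq_union]
    exact Finset.mem_union_right _ (mem_layersUpTo_length_of_mem_getD hbot)
  obtain ⟨S, hSG, hS, hScard⟩ :=
    (hL.1.isRankedDerivation hL.getD_zero_subset_known).exists_unsat_subset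
      unsat_singleton_emptyClause hbotGT
  obtain ⟨S', hS'F, hS', hS'card⟩ := exists_unsat_subset_frontier hSG hS
  refine le_trans (Nat.sInf_le (m := S'.card - 1) ?_) ?_
  · exact ⟨S', hS'F, hS', rfl⟩
  · rw [Finset.card_singleton] at hScard
    omega

/-- Remaining-length lower bound. -/
theorem remaining_length_bound (F : CFormula) (hF : Unsat F) (P : Subproblem)
    (L : List CFormula) (hL : CompatibleProof F P L) :
    sInf {k : ℕ | ∃ S : CFormula, S ⊆ Frontier P.known ∧ Unsat S ∧ k = S.card - 1}
      ≤ (layersUpTo L L.length \ P.known).card :=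
  remaining_length_bound_general F P L hL

end
end
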